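/- arXiv:2003.05884 — 2 statements merged into one kernel-verified Lean document; each statement's English description precedes it below -/
import Mathlib

section
/- Consider the recursion q_a^(k+1) = max(q_a^(k), q_a^(1) + max(0, q_w^(k))) and q_w^(k+1) = max(q_w^(k), q_w^(1) + max(0, q_a^(k))) with q_a^(1) > 0 and q_a^(1) + q_w^(1) ≤ 0. Then for all k ≥ 2, q_a^(k) = q_a^(1) and q_w^(k) = q_a^(1) + q_w^(1). -/
/-- For the exponent recursion
`q_a^(k+1) = max(q_a^(k), q_a^(1) + max(0, q_w^(k)))`,
`q_w^(k+1) = max(q_w^(k), q_w^(1) + max(0, q_a^(k)))`,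
if `q_a^(1) > 0` and `q_a^(1) + q_w^(1) ≤ 0`, then for all `k ≥ 2`,
`q_a^(k) = q_a^(1)` and `q_w^(k) = q_a^(1) + q_w^(1)`. -/
theorem exponent_recursion_pos_stationary (qa qw : ℕ → ℝ)
    (hrec_a : ∀ k ≥ 1, qa (k + 1) = max (qa k) (qa 1 + max 0 (qw k)))
    (hrec_w : ∀ k ≥ 1, qw (k + 1) = max (qw k) (qw 1 + max 0 (qa k)))
    (ha1 : 0 < qa 1) (hsum : qa 1 + qw 1 ≤ 0) :
    ∀ k ≥ 2, qa k = qa 1 ∧ qw k = qa 1 + qw 1 := by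
  intro k hk
  induction k with
  | zero => omega
  | succ n ih =>
    rcases Nat.lt_or_ge n 2 with hn | hn
    · interval_cases n
      · omega
      · have ha := hrec_a 1 le_rfl
        have hw := hrec_w 1 le_rfl
        have hqw1 : qw 1 ≤ 0 := by linarith
        constructor
        · rw [ha, max_eq_left hqw1, add_zero, max_self]
        · rw [hw, max_eq_right ha1.le, add_comm (qw 1) (qa 1),
            max_eq_right (by linarith : qw 1 ≤ qa 1 + qw 1)]
    · obtain ⟨hqa, hqw⟩ := ih hn
      have ha := hrec_a n (by omega)
      have hw := hrec_w n (by omega)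
      rw [hqa, hqw] at ha hw
      constructor
      · rw [ha, max_eq_left hsum, add_zero, max_self]
      · rw [hw, max_eq_right ha1.le, add_comm (qw 1) (qa 1), max_self]
end

section
/- Fix an integer H ≥ 2. Define sequences q_a^(k), q_w^(k), q_v^(k) for k ≥ 1 by q_a^(1) = q_w^(1) = −H/2, q_v^(1) = (1−H)/2, and the recursions q_{a}^(k+1) ≤ max(q_a^(k), −H/2 + max(0, 1/2 + q_w^(k), 1/2 + q_v^(k), H/2 + q_w^(k) + q_v^(k), H/2 + 2q_v^(k))), q_w^(k+1) ≤ max(q_w^(k), −H/2 + max(0, 1/2 + q_a^(k), 1/2 + q_v^(k), H/2 + q_a^(k) + q_v^(k), H/2 + 2q_v^(k))), and q_v^(k+1) ≤ max(q_v^(k), (1−H)/2 + max(0, 1/2 + q_a^(k), 1/2 + q_w^(k), 1/2 + q_v^(k), (H−1)/2 + q_a^(k) + q_w^(k), (H−1)/2 + q_w^(k) + q_v^(k), (H−1)/2 + q_a^(k) + q_v^(k))). Then for all k ≥ 1: q_a^(k) ≤ −H/2, q_w^(k) ≤ −H/2, and q_v^(k) ≤ (1−H)/2; in particular all three exponents are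 strictly negative. -/
/-- For a multi-layer network with `H ≥ 2` hidden-layer couplings in the mean-field
scaling, the weight-increment exponents satisfying the stated recursive inequalities
stay bounded by their initial values `q_a^(1) = q_w^(1) = −H/2`, `q_v^(1) = (1−H)/2`;
in particular all three exponents are strictly negative for all `k ≥ 1`, so the
discrete-time mean-field limit is trivial. -/
theorem multilayer_mf_exponents_stay_negative (H : ℕ) (hH : 2 ≤ H)
    (qa qw qv : ℕ → ℝ)
    (ha1 : qa 1 = -(H : ℝ) / 2) (hw1 : qw 1 = -(H : ℝ) / 2)
    (hv1 : qv 1 = (1 - (H : ℝ)) / 2)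
    (hrec_a : ∀ k ≥ 1, qa (k + 1) ≤ max (qa k) (-(H : ℝ) / 2 +
      max 0 (max (1 / 2 + qw k) (max (1 / 2 + qv k)
        (max ((H : ℝ) / 2 + qw k + qv k) ((H : ℝ) / 2 + 2 * qv k))))))
    (hrec_w : ∀ k ≥ 1, qw (k + 1) ≤ max (qw k) (-(H : ℝ) / 2 +
      max 0 (max (1 / 2 + qa k) (max (1 / 2 + qv k)
        (max ((H : ℝ) / 2 + qa k + qv k) ((H : ℝ) / 2 + 2 * qv k))))))
    (hrec_v : ∀ k ≥ 1, qv (k + 1) ≤ max (qv k) ((1 - (H : ℝ)) / 2 +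
      max 0 (max (1 / 2 + qa k) (max (1 / 2 + qw k) (max (1 / 2 + qv k)
        (max (((H : ℝ) - 1) / 2 + qa k + qw k)
          (max (((H : ℝ) - 1) / 2 + qw k + qv k)
            (((H : ℝ) - 1) / 2 + qa k + qv k)))))))) :
    ∀ k ≥ 1, qa k ≤ -(H : ℝ) / 2 ∧ qw k ≤ -(H : ℝ) / 2 ∧
      qv k ≤ (1 - (H : ℝ)) / 2 ∧ qa k < 0 ∧ qw k < 0 ∧ qv k < 0 := by

  have hH2 : (2:ℝ) ≤ (H:ℝ) := by exact_mod_cast hH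
  intro k hk
  induction k, hk using Nat.le_induction with
  | base =>
    refine ⟨le_of_eq ha1, le_of_eq hw1, le_of_eq hv1, ?_, ?_, ?_⟩ <;>
      simp only [ha1, hw1, hv1] <;> linarith
  | succ n hn ih =>
    obtain ⟨ia, iw, iv, _, _, _⟩ := ih
    have Ha := hrec_a n hn
    have Hw := hrec_w n hn
    have Hv := hrec_v n hn
    have Ma : max 0 (max (1 / 2 + qw n) (max (1 / 2 + qv n)
        (max ((H : ℝ) / 2 + qw n + qv n) ((H : ℝ) / 2 + 2 * qv n)))) ≤ 0 :=
      max_le le_rfl (max_le (by linarith) (max_le (by linarith)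
        (max_le (by linarith) (by linarith))))
    have Mw : max 0 (max (1 / 2 + qa n) (max (1 / 2 + qv n)
        (max ((H : ℝ) / 2 + qa n + qv n) ((H : ℝ) / 2 + 2 * qv n)))) ≤ 0 :=
      max_le le_rfl (max_le (by linarith) (max_le (by linarith)
        (max_le (by linarith) (by linarith))))
    have Mv : max 0 (max (1 / 2 + qa n) (max (1 / 2 + qw n) (max (1 / 2 + qv n)
        (max (((H : ℝ) - 1) / 2 + qa n + qw n)
          (max (((H : ℝ) - 1) / 2 + qw n + qv n)
            (((H : ℝ) - 1) / 2 + qa n + qv n)))))) ≤ 0 :=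
      max_le le_rfl (max_le (by linarith) (max_le (by linarith) (max_le (by linarith)
        (max_le (by linarith) (max_le (by linarith) (by linarith))))))
    have ba : qa (n + 1) ≤ -(H : ℝ) / 2 := le_trans Ha (max_le ia (by linarith))
    have bw : qw (n + 1) ≤ -(H : ℝ) / 2 := le_trans Hw (max_le iw (by linarith))
    have bv : qv (n + 1) ≤ (1 - (H : ℝ)) / 2 := le_trans Hv (max_le iv (by linarith))
    exact ⟨ba, bw, bv, by linarith, by linarith, by linarith⟩
end
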